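/- Let α ∈ [0,1] or α ∈ [2,3], and let 2 + 2α < p < 2(2+α). If 1/(2p−4α−4) − 1/((2p−4α−4)² B((2+α)/p, 2p−4α−4)) − α(1/(2p−4α) − 1/((2p−4α)² B((2+α)/p, 2p−4α))) + (α(α−1)/2)(1/(2p−4α+4) − 1/((2p−4α+4)² B((2+α)/p, 2p−4α+4))) − 1/(4(α+1)) ≤ 0, then condition (C) holds: ∫₀¹ I_t((2+α)/p, 1−(2+α)/p) t^{2p−4α−5}(1−t⁴)^α dt − 1/(4(α+1)) ≤ 0. -/

import Mathlib

open MeasureTheory intervalIntegral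

/-- The Beta function `B(x,y) = ∫₀¹ t^(x-1) (1-t)^(y-1) dt`. -/
noncomputable def betaFn (x y : ℝ) : ℝ :=
  ∫ t in (0:ℝ)..1, t ^ (x - 1) * (1 - t) ^ (y - 1)

/-- The incomplete Beta function `B_T(x,y) = ∫₀^T s^(x-1) (1-s)^(y-1) ds`. -/
noncomputable def betaInc (T x y : ℝ) : ℝ :=
  ∫ s in (0:ℝ)..T, s ^ (x - 1) * (1 - s) ^ (y - 1)

/-- The regularized incomplete Beta function `I_T(x,y) = B_T(x,y)/B(x,y)`. -/
noncomputable def betaReg (T x y : ℝ) : ℝ := betaInc T x y / betaFn x y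

/-- Generalized binomial coefficient `binom(α,k) = α(α-1)⋯(α-k+1)/k!`. -/
noncomputable def gBinom (α : ℝ) (k : ℕ) : ℝ :=
  (∏ i ∈ Finset.range k, (α - i)) / (Nat.factorial k)

/-- `ψ_{α,p}(t) = t^((2+α)/p - 1) (1-t)^(-(2+α)/p)`. -/
noncomputable def psiFn (α p t : ℝ) : ℝ :=
  t ^ ((2 + α) / p - 1) * (1 - t) ^ (-((2 + α) / p))

/-- `H_{α,p}(s) = Σ_k binom(α,k)(-1)^k/(p-2α-2+2k) - (1/(2(α+1)))(1-s⁴)^(α+1)`. -/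
noncomputable def Hfun (α p s : ℝ) : ℝ :=
  (∑' k : ℕ, gBinom α k * (-1) ^ k / (p - 2 * α - 2 + 2 * k)) -
    1 / (2 * (α + 1)) * (1 - s ^ 4) ^ (α + 1)

/-- `K_{α,p}(s,t) = Σ_k binom(α,k)(-1)^k max{s²,t²}^(p-2α-2+2k)/(p-2α-2+2k)`. -/
noncomputable def Kfun (α p s t : ℝ) : ℝ :=
  ∑' k : ℕ, gBinom α k * (-1) ^ k * (max (s ^ 2) (t ^ 2)) ^ (p - 2 * α - 2 + 2 * (k : ℝ)) /
    (p - 2 * α - 2 + 2 * k)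

/-- Condition (C): `∫₀¹ I_t((2+α)/p, 1-(2+α)/p) t^(2p-4α-5)(1-t⁴)^α dt - 1/(4(α+1)) ≤ 0`. -/
noncomputable def condC (α p : ℝ) : Prop :=
  (∫ t in (0:ℝ)..1,
      betaReg t ((2 + α) / p) (1 - (2 + α) / p) * t ^ (2 * p - 4 * α - 5) * (1 - t ^ 4) ^ α)
    - 1 / (4 * (α + 1)) ≤ 0

/-- Lebesgue area measure on `ℂ` normalized so that the unit disk has measure 1. -/
noncomputable def normalizedArea : Measure ℂ := (ENNReal.ofReal Real.pi)⁻¹ • volume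

/-- The (p-th power of the) weighted Bergman norm:
`‖f‖_{A^p_α} = ((α+1) ∫_𝔻 |f(w)|^p (1-|w|²)^α dA(w))^(1/p)`. -/
noncomputable def bergmanNorm (α p : ℝ) (f : ℂ → ℂ) : ℝ :=
  ((α + 1) * ∫ w in Metric.ball (0 : ℂ) 1,
      ‖f w‖ ^ p * (1 - ‖w‖ ^ 2) ^ α ∂normalizedArea) ^ (1 / p)

/-- Membership in the weighted Bergman space `A^p_α`: `f` is analytic on the unit disk and has
finite Bergman norm (the defining integrand is integrable). -/
def MemBergman (α p : ℝ) (f : ℂ → ℂ) : Prop :=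
  DifferentiableOn ℂ f (Metric.ball (0 : ℂ) 1) ∧
  IntegrableOn (fun w => ‖f w‖ ^ p * (1 - ‖w‖ ^ 2) ^ α)
    (Metric.ball (0 : ℂ) 1) normalizedArea

/-- The Hilbert matrix operator `ℋ(f)(z) = ∫₀¹ f(t/((t-1)z+1)) / ((t-1)z+1) dt`. -/
noncomputable def hilbertOp (f : ℂ → ℂ) (z : ℂ) : ℂ :=
  ∫ t in (0:ℝ)..1, f ((t : ℂ) / (((t : ℂ) - 1) * z + 1)) / (((t : ℂ) - 1) * z + 1)

/-- The operator norm of the Hilbert matrix operator on `A^p_α`: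
`sup { ‖ℋ f‖_{A^p_α} : f ∈ A^p_α, ‖f‖_{A^p_α} ≤ 1 }`. -/
noncomputable def hilbertOpNorm (α p : ℝ) : ℝ :=
  sSup {c : ℝ | ∃ f : ℂ → ℂ, MemBergman α p f ∧ bergmanNorm α p f ≤ 1 ∧
    c = bergmanNorm α p (hilbertOp f)}

/-! For `x = (2+α)/p` and `c = 2p-4α-4`, the Taylor bound `(1-u)^α ≤ 1 - αu + α(α-1)/2·u²`
(valid for `α ∈ [0,1] ∪ [2,∞)` by Bernoulli's inequality for the exponent `α-1`), applied with
`u = t⁴`, bounds the integrand of (C) by a combination of `I_t(x,1-x) t^(c+4k-1)`, `k = 0,1,2`.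
By Fubini, `∫₀¹ B_t(x,y) t^(c-1) dt = (B(x,y) - B(x+c,y))/c`, and the Gamma-function identity
`B(x,c) B(x+c,1-x) = B(x,1-x) B(1,c) = B(x,1-x)/c` turns each of these integrals into
`1/c - 1/(c² B(x,c))`; the hypothesis is exactly the resulting bound. -/

open Set
open scoped Interval

open Complex in
theorem ofReal_betaFn (a b : ℝ) : (betaFn a b : ℂ) = betaIntegral a b := by
  rw [betaFn, betaIntegral, ← intervalIntegral.integral_ofReal]
  refine intervalIntegral.integral_congr fun t ht => ?_
  rw [uIcc_of_le zero_le_one] at ht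
  push_cast
  rw [ofReal_cpow ht.1, ofReal_cpow (sub_nonneg.2 ht.2)]
  push_cast
  rfl

theorem betaFn_eq_beta {a b : ℝ} (ha : 0 < a) (hb : 0 < b) :
    betaFn a b = ProbabilityTheory.beta a b := by
  rw [ProbabilityTheory.beta_eq_betaIntegralReal a b ha hb, ← ofReal_betaFn, Complex.ofReal_re]

theorem betaFn_pos {a b : ℝ} (ha : 0 < a) (hb : 0 < b) : 0 < betaFn a b :=
  betaFn_eq_beta ha hb ▸ ProbabilityTheory.beta_pos ha hb

theorem betaFn_one_left {c : ℝ} (hc : 0 < c) : betaFn 1 c = 1 / c := by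
  rw [betaFn_eq_beta one_pos hc, ProbabilityTheory.beta, Real.Gamma_one, add_comm,
    Real.Gamma_add_one hc.ne']
  field_simp [(Real.Gamma_pos_of_pos hc).ne']

theorem betaFn_mul_betaFn_add {x y c : ℝ} (hx : 0 < x) (hy : 0 < y) (hc : 0 < c) :
    betaFn x c * betaFn (x + c) y = betaFn x y * betaFn (x + y) c := by
  simp only [betaFn_eq_beta, ProbabilityTheory.beta, *, add_pos]
  have := (Real.Gamma_pos_of_pos (add_pos hx hc)).ne'
  have := (Real.Gamma_pos_of_pos (add_pos hx hy)).ne'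
  rw [add_right_comm x c y]
  field_simp

theorem betaInc_nonneg {t : ℝ} (a b : ℝ) (ht0 : 0 ≤ t) (ht1 : t ≤ 1) : 0 ≤ betaInc t a b :=
  intervalIntegral.integral_nonneg ht0 fun s hs =>
    mul_nonneg (Real.rpow_nonneg hs.1 _) (Real.rpow_nonneg (by linarith [hs.2]) _)

theorem betaReg_nonneg {t : ℝ} (a b : ℝ) (ht0 : 0 ≤ t) (ht1 : t ≤ 1) : 0 ≤ betaReg t a b :=
  div_nonneg (betaInc_nonneg a b ht0 ht1) (betaInc_nonneg a b zero_le_one le_rfl)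

theorem intervalIntegrable_rpow_mul_one_sub_rpow {a b : ℝ} (ha : 0 < a) (hb : 0 < b) :
    IntervalIntegrable (fun t : ℝ => t ^ (a - 1) * (1 - t) ^ (b - 1)) volume 0 1 := by
  have h := (Complex.betaIntegral_convergent (u := a) (v := b) (by simpa) (by simpa)).norm
  refine h.congr fun t ht => ?_
  rw [Set.uIoc_of_le zero_le_one] at ht
  simp only [← Complex.ofReal_one, ← Complex.ofReal_sub, norm_mul, Complex.norm_cpow_real,
    Complex.norm_real, Real.norm_eq_abs, abs_of_nonneg ht.1.le, abs_of_nonneg (sub_nonneg.2 ht.2)]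

section Primitive

variable {f g : ℝ → ℝ} {a b : ℝ}

theorem integral_primitive_mul (hab : a ≤ b) (hf : IntegrableOn f (Ioc a b))
    (hg : IntegrableOn g (Ioc a b)) :
    IntervalIntegrable (fun t => (∫ s in a..t, f s) * g t) volume a b ∧
      ∫ t in a..b, (∫ s in a..t, f s) * g t = ∫ s in a..b, f s * ∫ t in s..b, g t := by
  set μ := volume.restrict (Ioc a b)
  set F := {q : ℝ × ℝ | q.1 ≤ q.2}.indicator fun q => f q.1 * g q.2
  have hF : Integrable F (μ.prod μ) :=
    (hf.mul_prod hg).indicator (measurableSet_le measurable_fst measurable_snd)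
  have integral_fst : ∀ t ∈ Ioc a b, ∫ s, F (s, t) ∂μ = (∫ s in a..t, f s) * g t := by
    intro t ht
    have : (fun s => F (s, t)) = (Iic t).indicator fun s => f s * g t := by
      ext s; simp [F, indicator_apply]
    rw [this, MeasureTheory.integral_indicator measurableSet_Iic,
      Measure.restrict_restrict measurableSet_Iic, Iic_inter_Ioc_of_le ht.2,
      MeasureTheory.integral_mul_const, intervalIntegral.integral_of_le ht.1.le]
  have integral_snd : ∀ s ∈ Ioc a b, ∫ t, F (s, t) ∂μ = f s * ∫ t in s..b, g t := by
    intro s hs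
    have : (fun t => F (s, t)) = (Ici s).indicator fun t => f s * g t := by
      ext t; simp [F, indicator_apply]
    have hset : Ici s ∩ Ioc a b = Icc s b := by
      ext t
      simp only [mem_inter_iff, mem_Ici, mem_Ioc, mem_Icc]
      exact ⟨fun h => ⟨h.1, h.2.2⟩, fun h => ⟨h.1, hs.1.trans_le h.1, h.2⟩⟩
    rw [this, MeasureTheory.integral_indicator measurableSet_Ici,
      Measure.restrict_restrict measurableSet_Ici, hset, MeasureTheory.integral_const_mul,
      integral_Icc_eq_integral_Ioc, intervalIntegral.integral_of_le hs.2]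
  constructor
  · rw [intervalIntegrable_iff_integrableOn_Ioc_of_le hab]
    exact hF.integral_prod_right.congr <|
      (ae_restrict_mem measurableSet_Ioc).mono integral_fst
  · rw [intervalIntegral.integral_of_le hab, intervalIntegral.integral_of_le hab,
      ← setIntegral_congr_fun measurableSet_Ioc integral_fst,
      ← setIntegral_congr_fun measurableSet_Ioc integral_snd]
    exact (integral_integral_swap (f := fun s t => F (s, t)) hF).symm

end Primitive

theorem integral_betaInc_mul_rpow {a b c : ℝ} (ha : 0 < a) (hb : 0 < b) (hc : 0 < c) :
    IntervalIntegrable (fun t => betaInc t a b * t ^ (c - 1)) volume 0 1 ∧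
      ∫ t in (0:ℝ)..1, betaInc t a b * t ^ (c - 1) = (betaFn a b - betaFn (a + c) b) / c := by
  obtain ⟨hint, heq⟩ := integral_primitive_mul zero_le_one
    (intervalIntegrable_rpow_mul_one_sub_rpow ha hb).1
    (intervalIntegrable_rpow' (r := c - 1) (by linarith)).1
  refine ⟨hint, heq.trans ?_⟩
  have htail (s : ℝ) : ∫ t in s..1, t ^ (c - 1) = (1 - s ^ c) / c := by
    rw [integral_rpow (Or.inl (by linarith)), sub_add_cancel, Real.one_rpow]
  simp_rw [htail]
  have hshift : ∀ s ∈ Ι (0:ℝ) 1, s ^ (a - 1) * (1 - s) ^ (b - 1) * ((1 - s ^ c) / c) =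
      (s ^ (a - 1) * (1 - s) ^ (b - 1) - s ^ (a + c - 1) * (1 - s) ^ (b - 1)) / c := by
    intro s hs
    rw [uIoc_of_le zero_le_one] at hs
    rw [add_sub_right_comm, Real.rpow_add hs.1]
    ring
  rw [integral_congr_ae (Filter.Eventually.of_forall hshift), intervalIntegral.integral_div,
    integral_sub (intervalIntegrable_rpow_mul_one_sub_rpow ha hb)
      (intervalIntegrable_rpow_mul_one_sub_rpow (by linarith) hb)]
  rfl

theorem integral_betaReg_mul_rpow {x c : ℝ} (hx0 : 0 < x) (hx1 : x < 1) (hc : 0 < c) :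
    IntervalIntegrable (fun t => betaReg t x (1 - x) * t ^ (c - 1)) volume 0 1 ∧
      ∫ t in (0:ℝ)..1, betaReg t x (1 - x) * t ^ (c - 1) =
        1 / c - 1 / (c ^ 2 * betaFn x c) := by
  have h1x : 0 < 1 - x := by linarith
  obtain ⟨hint, heq⟩ := integral_betaInc_mul_rpow hx0 h1x hc
  have hreg : (fun t => betaReg t x (1 - x) * t ^ (c - 1)) =
      fun t => betaInc t x (1 - x) * t ^ (c - 1) / betaFn x (1 - x) := by
    ext t; rw [betaReg]; ring
  refine ⟨hreg ▸ hint.div_const _, ?_⟩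
  have hmul := betaFn_mul_betaFn_add hx0 h1x hc
  rw [add_sub_cancel, betaFn_one_left hc] at hmul
  have := (betaFn_pos hx0 hc).ne'
  have := (betaFn_pos hx0 h1x).ne'
  have := hc.ne'
  field_simp at hmul
  rw [hreg, intervalIntegral.integral_div, heq]
  field_simp
  linear_combination -hmul

theorem one_add_mul_self_le_rpow_one_add_of_nonpos {s p : ℝ} (hs : -1 < s) (hp1 : -1 ≤ p)
    (hp2 : p ≤ 0) : 1 + p * s ≤ (1 + s) ^ p := by
  have h1s : 0 < 1 + s := by linarith
  have hconc : (1 + s) ^ (-p) ≤ 1 + -p * s :=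
    rpow_one_add_le_one_add_mul_self hs.le (by linarith) (by linarith)
  have hpos : 0 < (1 + s) ^ (-p) := Real.rpow_pos_of_pos h1s _
  have hinv : (1 + s) ^ p * (1 + s) ^ (-p) = 1 := by
    rw [← Real.rpow_add h1s, add_neg_cancel, Real.rpow_zero]
  have hpow : 0 < (1 + s) ^ p := Real.rpow_pos_of_pos h1s _
  -- `(1 + p s)(1 - p s) ≤ 1`, and `(1 + s) ^ (-p) ≤ 1 - p s` inverts to the claim
  nlinarith [mul_le_mul_of_nonneg_left hconc (le_of_lt hpow), sq_nonneg (p * s)]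

theorem one_sub_rpow_le_one_sub_mul_add {α u : ℝ} (hα : α ∈ Icc (0:ℝ) 1 ∨ 2 ≤ α)
    (hu0 : 0 ≤ u) (hu1 : u ≤ 1) :
    (1 - u) ^ α ≤ 1 - α * u + α * (α - 1) / 2 * u ^ 2 := by
  have hα0 : 0 ≤ α := hα.elim (·.1) fun hα2 => by linarith
  set g : ℝ → ℝ := fun v => 1 - α * v + α * (α - 1) / 2 * v ^ 2 - (1 - v) ^ α
  suffices MonotoneOn g (Icc 0 1) by
    have := this (left_mem_Icc.2 zero_le_one) ⟨hu0, hu1⟩ hu0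
    simpa [g] using this
  have hbernoulli : ∀ v ∈ Ioo (0:ℝ) 1, 1 - (α - 1) * v ≤ (1 - v) ^ (α - 1) := by
    intro v hv
    have := hα.elim
      (fun h => one_add_mul_self_le_rpow_one_add_of_nonpos (s := -v) (by linarith [hv.2])
        (by linarith [h.1]) (by linarith [h.2]))
      (fun h => one_add_mul_self_le_rpow_one_add (s := -v) (by linarith [hv.2])
        (by linarith : 1 ≤ α - 1))
    rwa [← sub_eq_add_neg, mul_neg, ← sub_eq_add_neg] at this
  refine monotoneOn_of_hasDerivWithinAt_nonneg (convex_Icc 0 1)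
    (f' := fun v => α * ((1 - v) ^ (α - 1) - (1 - (α - 1) * v))) ?_ (fun v hv => ?_)
    (fun v hv => ?_)
  · have hpoly : Continuous fun v : ℝ => 1 - α * v + α * (α - 1) / 2 * v ^ 2 := by fun_prop
    exact hpoly.continuousOn.sub
      ((continuous_const.sub continuous_id).continuousOn.rpow_const fun _ _ => Or.inr hα0)
  · rw [interior_Icc] at hv
    have hpow : HasDerivAt (fun v : ℝ => (1 - v) ^ α) (-1 * α * (1 - v) ^ (α - 1)) v :=
      ((hasDerivAt_id' v).const_sub 1).rpow_const (Or.inl (by linarith [hv.2]))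
    refine HasDerivAt.hasDerivWithinAt ?_
    exact (((((hasDerivAt_id' v).const_mul α).const_sub 1).add
      ((hasDerivAt_pow 2 v).const_mul (α * (α - 1) / 2))).sub hpow).congr_deriv
        (by push_cast; ring)
  · rw [interior_Icc] at hv
    exact mul_nonneg hα0 (sub_nonneg.2 (hbernoulli v hv))

theorem integral_betaReg_mul_rpow_mul_one_sub_pow_four_le {α x c : ℝ}
    (hα : α ∈ Icc (0:ℝ) 1 ∨ 2 ≤ α) (hx0 : 0 < x) (hx1 : x < 1) (hc : 0 < c) :
    ∫ t in (0:ℝ)..1, betaReg t x (1 - x) * t ^ (c - 1) * (1 - t ^ 4) ^ α ≤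
      1 / c - 1 / (c ^ 2 * betaFn x c)
        - α * (1 / (c + 4) - 1 / ((c + 4) ^ 2 * betaFn x (c + 4)))
        + α * (α - 1) / 2 * (1 / (c + 8) - 1 / ((c + 8) ^ 2 * betaFn x (c + 8))) := by
  have hα0 : 0 ≤ α := hα.elim (·.1) fun hα2 => by linarith
  obtain ⟨hint₀, heq₀⟩ := integral_betaReg_mul_rpow hx0 hx1 hc
  obtain ⟨hint₄, heq₄⟩ := integral_betaReg_mul_rpow hx0 hx1 (c := c + 4) (by linarith)
  obtain ⟨hint₈, heq₈⟩ := integral_betaReg_mul_rpow hx0 hx1 (c := c + 8) (by linarith)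
  have hint := (hint₀.sub (hint₄.const_mul α)).add (hint₈.const_mul (α * (α - 1) / 2))
  rw [← heq₀, ← heq₄, ← heq₈, ← intervalIntegral.integral_const_mul,
    ← intervalIntegral.integral_const_mul, ← integral_sub hint₀ (hint₄.const_mul α),
    ← integral_add (hint₀.sub (hint₄.const_mul α)) (hint₈.const_mul _)]
  refine integral_mono_on_of_le_Ioo zero_le_one (hint₀.mul_continuousOn ?_) hint fun t ht => ?_
  · exact (continuous_const.sub (continuous_pow 4)).continuousOn.rpow_const fun _ _ => Or.inr hα0
  have hpow (n : ℝ) : t ^ (c + n - 1) = t ^ (c - 1) * t ^ n := by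
    rw [add_sub_right_comm, Real.rpow_add ht.1]
  have htaylor := one_sub_rpow_le_one_sub_mul_add hα (pow_nonneg ht.1.le 4)
    (pow_le_one₀ ht.1.le ht.2.le)
  have hJ : 0 ≤ betaReg t x (1 - x) * t ^ (c - 1) :=
    mul_nonneg (betaReg_nonneg _ _ ht.1.le ht.2.le) (Real.rpow_nonneg ht.1.le _)
  calc betaReg t x (1 - x) * t ^ (c - 1) * (1 - t ^ 4) ^ α
      ≤ betaReg t x (1 - x) * t ^ (c - 1) * (1 - α * t ^ 4 + α * (α - 1) / 2 * (t ^ 4) ^ 2) :=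
        mul_le_mul_of_nonneg_left htaylor hJ
    _ = _ := by
        rw [hpow, hpow, show (4:ℝ) = (4:ℕ) by norm_num, show (8:ℝ) = (8:ℕ) by norm_num,
          Real.rpow_natCast, Real.rpow_natCast]
        ring

theorem sufficient_condition_for_condC_general (α p : ℝ)
    (hα : α ∈ Set.Icc (0:ℝ) 1 ∨ α ∈ Set.Icc (2:ℝ) 3)
    (hp1 : 2 + 2 * α < p)
    (h : 1 / (2 * p - 4 * α - 4)
        - 1 / ((2 * p - 4 * α - 4) ^ 2 * betaFn ((2 + α) / p) (2 * p - 4 * α - 4))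
      - α * (1 / (2 * p - 4 * α)
        - 1 / ((2 * p - 4 * α) ^ 2 * betaFn ((2 + α) / p) (2 * p - 4 * α)))
      + (α * (α - 1) / 2) * (1 / (2 * p - 4 * α + 4)
        - 1 / ((2 * p - 4 * α + 4) ^ 2 * betaFn ((2 + α) / p) (2 * p - 4 * α + 4)))
      - 1 / (4 * (α + 1)) ≤ 0) :
    condC α p := by
  have hα' : α ∈ Icc (0:ℝ) 1 ∨ 2 ≤ α := hα.imp_right (·.1)
  have hα0 : 0 ≤ α := hα'.elim (·.1) fun hα2 => by linarith
  have hp : 0 < p := by linarith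
  have hbound := integral_betaReg_mul_rpow_mul_one_sub_pow_four_le (x := (2 + α) / p)
    (c := 2 * p - 4 * α - 4) hα' (div_pos (by linarith) hp) ((div_lt_one hp).2 (by linarith))
    (by linarith)
  rw [show 2 * p - 4 * α - 4 - 1 = 2 * p - 4 * α - 5 by ring,
    show 2 * p - 4 * α - 4 + 4 = 2 * p - 4 * α by ring,
    show 2 * p - 4 * α - 4 + 8 = 2 * p - 4 * α + 4 by ring] at hbound
  rw [condC]
  linarith

theorem sufficient_condition_for_condC (α p : ℝ)
    (hα : α ∈ Set.Icc (0:ℝ) 1 ∨ α ∈ Set.Icc (2:ℝ) 3)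
    (hp1 : 2 + 2 * α < p) (hp2 : p < 2 * (2 + α))
    (h : 1 / (2 * p - 4 * α - 4)
        - 1 / ((2 * p - 4 * α - 4) ^ 2 * betaFn ((2 + α) / p) (2 * p - 4 * α - 4))
      - α * (1 / (2 * p - 4 * α)
        - 1 / ((2 * p - 4 * α) ^ 2 * betaFn ((2 + α) / p) (2 * p - 4 * α)))
      + (α * (α - 1) / 2) * (1 / (2 * p - 4 * α + 4)
        - 1 / ((2 * p - 4 * α + 4) ^ 2 * betaFn ((2 + α) / p) (2 * p - 4 * α + 4)))
      - 1 / (4 * (α + 1)) ≤ 0) :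
    condC α p :=
  sufficient_condition_for_condC_general α p hα hp1 h
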